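/- arXiv:2108.01642 — 2 statements merged into one kernel-verified Lean document; each statement's English description precedes it below -/
import Mathlib

section
/- Let δ ≥ 0. If R ⊆ G_d is a δ-nonrecurrent subset of the finite group G_d and α ∈ 𝕋^d, then for all sufficiently small ε > 0, the set S := {n ∈ ℤ : nα ∈ R + V_ε} is a δ-nonrecurrent subset of ℤ. -/
open Pointwise

/-- The upper asymptotic density of a set of integers:
`limsup_{N→∞} |A ∩ {1,…,N}| / N`. -/
noncomputable def upperDensity (A : Set ℤ) : ℝ :=
  Filter.limsup (fun N : ℕ => ((A ∩ Set.Icc (1 : ℤ) (N : ℤ)).ncard : ℝ) / N) Filter.atTop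

/-- `S ⊆ ℤ` is `δ`-nonrecurrent: there is `A ⊆ ℤ` with `d̄(A) > δ` and
`(A - A) ∩ S = ∅`. -/
def IntNonrecurrent (δ : ℝ) (S : Set ℤ) : Prop :=
  ∃ A : Set ℤ, δ < upperDensity A ∧ ∀ a ∈ A, ∀ b ∈ A, a - b ∉ S

/-- The finite subgroup `G_d = {0, 1/2}^d ⊆ 𝕋^d`. -/
def Gd (d : ℕ) : Set (Fin d → UnitAddCircle) :=
  {x | ∀ j, x j = 0 ∨ x j = ((1 / 2 : ℝ) : UnitAddCircle)}

/-- The open box `V_ε = {x ∈ 𝕋^d : max_j ‖x_j‖ < ε}`. -/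
def Veps (d : ℕ) (ε : ℝ) : Set (Fin d → UnitAddCircle) :=
  {x | ∀ j, ‖x j‖ < ε}

/-!
Let `A ⊆ G_d` witness the nonrecurrence of `R`. For `t ∈ 𝕋^d` put
`B_t = {n : nα - t ∈ A + V_ρ}`. A difference `n` of two elements of `B_t` has
`nα ∈ (A - A) + V_{2ρ}`; since every nonzero point of `G_d` has a coordinate `1/2`, this misses
`R + V_ε` as soon as `2ρ + ε ≤ 1/2`. For `ρ ≤ 1/4` the boxes `a + V_ρ` (`a ∈ A`) are disjoint, so
when `t` runs over the grid `(M⁻¹ℤ/ℤ)^d` each `n` lies in about `|A| (2ρM)^d` of the `B_t`.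
Averaging, some `B_t` has upper density about `|A| (2ρ)^d`, which exceeds `δ` for `ρ` close to
`1/4`.
-/

open Finset Filter

lemma UnitAddCircle.norm_coe_le_abs (x : ℝ) : ‖(x : UnitAddCircle)‖ ≤ |x| := by
  rw [UnitAddCircle.norm_eq]
  simpa using round_le x 0

section Torus

variable {d : ℕ}

lemma sub_mem_Veps {x y : Fin d → UnitAddCircle} {ε ε' : ℝ} (hx : x ∈ Veps d ε)
    (hy : y ∈ Veps d ε') : x - y ∈ Veps d (ε + ε') :=
  fun j => (norm_sub_le _ _).trans_lt (add_lt_add (hx j) (hy j))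

lemma norm_half_unitAddCircle : ‖((1 / 2 : ℝ) : UnitAddCircle)‖ = 1 / 2 := by
  simpa using AddCircle.norm_half_period_eq (p := (1 : ℝ))

lemma half_unitAddCircle_ne_zero : ((1 / 2 : ℝ) : UnitAddCircle) ≠ 0 := by
  intro h
  have := norm_half_unitAddCircle
  rw [h, norm_zero] at this
  norm_num at this

lemma neg_half_unitAddCircle : -((1 / 2 : ℝ) : UnitAddCircle) = ((1 / 2 : ℝ) : UnitAddCircle) := by
  refine neg_eq_of_add_eq_zero_left ?_
  rw [← AddCircle.coe_add]
  norm_num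

lemma sub_mem_Gd {x y : Fin d → UnitAddCircle} (hx : x ∈ Gd d) (hy : y ∈ Gd d) :
    x - y ∈ Gd d := by
  intro j
  rcases hx j with h | h <;> rcases hy j with h' | h' <;>
    simp only [Pi.sub_apply, h, h', sub_self, sub_zero, zero_sub, neg_half_unitAddCircle,
      true_or, or_true]

lemma eq_zero_of_mem_Gd_of_mem_Veps {x : Fin d → UnitAddCircle} {ε : ℝ} (hx : x ∈ Gd d)
    (hxε : x ∈ Veps d ε) (hε : ε ≤ 1 / 2) : x = 0 := by
  funext j
  refine (hx j).resolve_right fun h => ?_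
  have := (hxε j).trans_le hε
  rw [h, norm_half_unitAddCircle] at this
  exact lt_irrefl _ this

open scoped Classical in
lemma Gd_eq_piFinset :
    Gd d = ↑(Fintype.piFinset fun _ : Fin d => {0, ((1 / 2 : ℝ) : UnitAddCircle)}) := by
  ext x
  simp [Gd]

lemma Gd_finite : (Gd d).Finite := by
  classical
  exact Gd_eq_piFinset ▸ Finset.finite_toSet _

lemma ncard_Gd : (Gd d).ncard = 2 ^ d := by
  classical
  rw [Gd_eq_piFinset, Set.ncard_coe_finset, Fintype.card_piFinset,
    Finset.card_pair half_unitAddCircle_ne_zero.symm]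
  simp

lemma sub_notMem_add_Veps {A R : Set (Fin d → UnitAddCircle)} (hA : A ⊆ Gd d) (hR : R ⊆ Gd d)
    (hAR : ∀ a ∈ A, ∀ b ∈ A, a - b ∉ R) {ρ ε : ℝ} (h : 2 * ρ + ε ≤ 1 / 2)
    {x y : Fin d → UnitAddCircle} (hx : x ∈ A + Veps d ρ) (hy : y ∈ A + Veps d ρ) :
    x - y ∉ R + Veps d ε := by
  rintro ⟨r, hr, w, hw, hxy⟩
  obtain ⟨a, ha, u, hu, rfl⟩ := hx
  obtain ⟨b, hb, v, hv, rfl⟩ := hy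
  have hsmall : r - (a - b) ∈ Veps d (ρ + ρ + ε) := by
    have : r - (a - b) = u - v - w := by
      have hxy : r + w = a + u - (b + v) := hxy
      rw [eq_sub_of_add_eq hxy]; abel
    exact this ▸ sub_mem_Veps (sub_mem_Veps hu hv) hw
  have := eq_zero_of_mem_Gd_of_mem_Veps (sub_mem_Gd (hR hr) (sub_mem_Gd (hA ha) (hA hb)))
    hsmall (by linarith)
  exact hAR a ha b hb (sub_eq_zero.mp this ▸ hr)

end Torus

lemma sub_sub_one_le_card_Ioo_floor_ceil (u v : ℝ) : v - u - 1 ≤ #(Finset.Ioo ⌊u⌋ ⌈v⌉) := by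
  calc v - u - 1 ≤ ((⌈v⌉ - ⌊u⌋ - 1 : ℤ) : ℝ) := by
        push_cast
        linarith [Int.le_ceil v, Int.floor_le u]
    _ ≤ #(Finset.Ioo ⌊u⌋ ⌈v⌉) := by
        rw [Int.card_Ioo]
        exact_mod_cast Int.self_le_toNat _

open scoped Classical in
lemma le_card_norm_sub_toAddCircle_lt (M : ℕ) [NeZero M] {ρ : ℝ} (hρ : ρ ≤ 1 / 2)
    (x : UnitAddCircle) :
    2 * ρ * M - 1 ≤ #{i : ZMod M | ‖x - ZMod.toAddCircle i‖ < ρ} := by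
  obtain ⟨ξ, rfl⟩ := QuotientAddGroup.mk_surjective x
  have hM : (0 : ℝ) < M := by exact_mod_cast Nat.pos_of_neZero M
  set I := Finset.Ioo ⌊M * (ξ - ρ)⌋ ⌈M * (ξ + ρ)⌉
  have hI : ∀ k ∈ I, |(k : ℝ) - M * ξ| < M * ρ := by
    intro k hk
    rw [Finset.mem_Ioo, Int.floor_lt, Int.lt_ceil] at hk
    rw [abs_sub_lt_iff]
    constructor <;> linarith
  have hmaps : ∀ k ∈ I,
      (k : ZMod M) ∈ ({i | ‖(ξ : UnitAddCircle) - ZMod.toAddCircle i‖ < ρ} : Finset _) := by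
    intro k hk
    rw [Finset.mem_filter, ZMod.toAddCircle_intCast, ← AddCircle.coe_sub]
    refine ⟨Finset.mem_univ _, (UnitAddCircle.norm_coe_le_abs _).trans_lt ?_⟩
    have : ξ - k / M = -((k - M * ξ) / M) := by field_simp; ring
    rw [this, abs_neg, abs_div, abs_of_pos hM, div_lt_iff₀ hM, mul_comm ρ]
    exact hI k hk
  have hinj : Set.InjOn (fun k : ℤ => (k : ZMod M)) I := by
    intro k hk k' hk' h
    have hdvd := (ZMod.intCast_eq_intCast_iff_dvd_sub k k' M).mp h
    have hlt : |(k' : ℝ) - k| < M := by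
      have h₁ := abs_lt.mp (hI k hk)
      have h₂ := abs_lt.mp (hI k' hk')
      rw [abs_sub_lt_iff]
      constructor <;> nlinarith
    have : |k' - k| < (M : ℤ) := by exact_mod_cast hlt
    linarith [Int.eq_zero_of_abs_lt_dvd hdvd this]
  calc 2 * ρ * M - 1 = M * (ξ + ρ) - M * (ξ - ρ) - 1 := by ring
    _ ≤ #I := sub_sub_one_le_card_Ioo_floor_ceil _ _
    _ ≤ _ := by exact_mod_cast Finset.card_le_card_of_injOn _ hmaps hinj

open scoped Classical in
lemma pow_le_card_norm_sub_toAddCircle_lt {ι : Type*} [Fintype ι] [DecidableEq ι] (M : ℕ)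
    [NeZero M] {ρ : ℝ} (hρ : ρ ≤ 1 / 2) (hρM : 1 ≤ 2 * ρ * M) (x : ι → UnitAddCircle) :
    (2 * ρ * M - 1) ^ Fintype.card ι ≤
      #{k : ι → ZMod M | ∀ j, ‖x j - ZMod.toAddCircle (k j)‖ < ρ} := by
  have : ({k : ι → ZMod M | ∀ j, ‖x j - ZMod.toAddCircle (k j)‖ < ρ} : Finset _) =
      Fintype.piFinset fun j => {i : ZMod M | ‖x j - ZMod.toAddCircle i‖ < ρ} := by
    ext k
    simp [Fintype.mem_piFinset]
  rw [this, Fintype.card_piFinset, Nat.cast_prod, ← Finset.card_univ, ← Finset.prod_const]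
  exact Finset.prod_le_prod (fun _ _ => by linarith) fun j _ =>
    le_card_norm_sub_toAddCircle_lt M hρ (x j)

open scoped Classical in
lemma ncard_mul_pow_le_card_sub_mem_add_Veps {d : ℕ} {A : Set (Fin d → UnitAddCircle)}
    (hA : A ⊆ Gd d) (M : ℕ) [NeZero M] {ρ : ℝ} (hρ : ρ ≤ 1 / 4) (hρM : 1 ≤ 2 * ρ * M)
    (y : Fin d → UnitAddCircle) :
    A.ncard * (2 * ρ * M - 1) ^ d ≤
      #{k : Fin d → ZMod M | y - (fun j => ZMod.toAddCircle (k j)) ∈ A + Veps d ρ} := by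
  set t : (Fin d → ZMod M) → Fin d → UnitAddCircle := fun k j => ZMod.toAddCircle (k j)
  have hAfin : A.Finite := Gd_finite.subset hA
  set P : (Fin d → UnitAddCircle) → Finset (Fin d → ZMod M) :=
    fun a => {k | y - t k - a ∈ Veps d ρ}
  have hsub : hAfin.toFinset.biUnion P ⊆ ({k | y - t k ∈ A + Veps d ρ} : Finset _) := by
    intro k hk
    obtain ⟨a, ha, hk⟩ := Finset.mem_biUnion.mp hk
    simp only [Finset.mem_filter, Finset.mem_univ, true_and, P] at hk ⊢
    exact ⟨a, hAfin.mem_toFinset.mp ha, _, hk, add_sub_cancel _ _⟩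
  have hdisj : (hAfin.toFinset : Set _).PairwiseDisjoint P := by
    intro a ha b hb hab
    refine Finset.disjoint_left.mpr fun k hka hkb => hab ?_
    simp only [Finset.mem_filter, Finset.mem_univ, true_and, P] at hka hkb
    have hsmall := sub_mem_Veps hka hkb
    rw [sub_sub_sub_cancel_left] at hsmall
    exact (sub_eq_zero.mp (eq_zero_of_mem_Gd_of_mem_Veps
      (sub_mem_Gd (hA (hAfin.mem_toFinset.mp hb)) (hA (hAfin.mem_toFinset.mp ha)))
      hsmall (by linarith))).symm
  have hP : ∀ a, (2 * ρ * M - 1) ^ d ≤ #(P a) := by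
    intro a
    convert pow_le_card_norm_sub_toAddCircle_lt M (by linarith) hρM (y - a) using 4
    · simp
    · simp [Veps, sub_right_comm, t]
  calc A.ncard * (2 * ρ * M - 1) ^ d ≤ ∑ a ∈ hAfin.toFinset, (#(P a) : ℝ) := by
        rw [Set.ncard_eq_toFinset_card A hAfin, ← nsmul_eq_mul]
        exact Finset.card_nsmul_le_sum _ _ _ fun a _ => hP a
    _ = #(hAfin.toFinset.biUnion P) := by rw [Finset.card_biUnion hdisj]; push_cast; rfl
    _ ≤ _ := by exact_mod_cast Finset.card_le_card hsub

lemma ncard_inter_Icc_eq_card_filter (A : Set ℤ) (N : ℕ) [DecidablePred (· ∈ A)] :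
    (A ∩ Set.Icc 1 (N : ℤ)).ncard = #{n ∈ Finset.Icc 1 (N : ℤ) | n ∈ A} := by
  rw [← Set.ncard_coe_finset, Finset.coe_filter]
  congr 1
  ext n
  simp only [Set.mem_inter_iff, Set.mem_ofPred_eq, Finset.mem_Icc, Set.mem_Icc]
  tauto

open scoped Classical in
lemma le_upperDensity_of_frequently {A : Set ℤ} {c : ℝ}
    (h : ∃ᶠ N : ℕ in atTop, c * N ≤ #{n ∈ Finset.Icc 1 (N : ℤ) | n ∈ A}) :
    c ≤ upperDensity A := by
  refine le_limsup_of_frequently_le ((h.and_eventually (eventually_ge_atTop 1)).mono ?_) ?_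
  · rintro N ⟨hN, hN1⟩
    rw [ncard_inter_Icc_eq_card_filter, le_div_iff₀ (by exact_mod_cast hN1)]
    exact hN
  · refine isBoundedUnder_of ⟨1, fun N => div_le_one_of_le₀ ?_ N.cast_nonneg⟩
    calc ((A ∩ Set.Icc 1 (N : ℤ)).ncard : ℝ) ≤ (Set.Icc 1 (N : ℤ)).ncard := by
          exact_mod_cast Set.ncard_le_ncard Set.inter_subset_right (Set.finite_Icc _ _)
      _ = N := by simp [Set.ncard_eq_toFinset_card']

open scoped Classical in
lemma exists_le_upperDensity_of_le_card {K : Type*} [Fintype K] [Nonempty K] (B : K → Set ℤ)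
    {c : ℝ} (hc : ∀ n : ℤ, c ≤ #{k | n ∈ B k}) :
    ∃ k, c / Fintype.card K ≤ upperDensity (B k) := by
  have hK : (0 : ℝ) < Fintype.card K := by exact_mod_cast Fintype.card_pos
  suffices ∀ N : ℕ, ∃ k, c / Fintype.card K * N ≤ #{n ∈ Finset.Icc 1 (N : ℤ) | n ∈ B k} by
    obtain ⟨k, hk⟩ := frequently_exists.mp (Frequently.of_forall (f := atTop) this)
    exact ⟨k, le_upperDensity_of_frequently hk⟩
  intro N
  have hsum : ∑ _k : K, c / Fintype.card K * N ≤
      ∑ k : K, (#{n ∈ Finset.Icc 1 (N : ℤ) | n ∈ B k} : ℝ) := by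
    calc ∑ _k : K, c / Fintype.card K * N = ∑ _n ∈ Finset.Icc 1 (N : ℤ), c := by
          simp only [Finset.sum_const, Finset.card_univ, Int.card_Icc, add_sub_cancel_right,
            Int.toNat_natCast, nsmul_eq_mul]
          field_simp
      _ ≤ ∑ n ∈ Finset.Icc 1 (N : ℤ), (#{k | n ∈ B k} : ℝ) := Finset.sum_le_sum fun n _ => hc n
      _ = _ := by
          exact_mod_cast Finset.sum_card_bipartiteAbove_eq_sum_card_bipartiteBelow
            (fun n k => n ∈ B k)
  obtain ⟨k, -, hk⟩ := Finset.exists_le_of_sum_le Finset.univ_nonempty hsum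
  exact ⟨k, hk⟩

lemma exists_le_upperDensity_sub_mem_add_Veps {d : ℕ} {A : Set (Fin d → UnitAddCircle)}
    (hA : A ⊆ Gd d) {ρ θ : ℝ} (hρ : ρ ≤ 1 / 4) (hθ : 0 ≤ θ) (hθρ : θ < 2 * ρ)
    (α : Fin d → UnitAddCircle) :
    ∃ t, A.ncard * θ ^ d ≤ upperDensity {n : ℤ | n • α - t ∈ A + Veps d ρ} := by
  set M := ⌈(2 * ρ - θ)⁻¹⌉₊
  have hM : (2 * ρ - θ)⁻¹ ≤ M := Nat.le_ceil _
  have hM0 : (0 : ℝ) < M := (inv_pos.mpr (by linarith)).trans_le hM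
  have : NeZero M := ⟨by exact_mod_cast hM0.ne'⟩
  have hθM : θ * M ≤ 2 * ρ * M - 1 := by
    rw [inv_le_iff_one_le_mul₀ (by linarith)] at hM
    linarith
  obtain ⟨k, hk⟩ := exists_le_upperDensity_of_le_card
    (fun k : Fin d → ZMod M => {n : ℤ | n • α - (fun j => ZMod.toAddCircle (k j)) ∈ A + Veps d ρ})
    (fun n => ncard_mul_pow_le_card_sub_mem_add_Veps hA M hρ (by nlinarith) (n • α))
  refine ⟨_, le_trans ?_ hk⟩
  rw [Fintype.card_pi, Finset.prod_const, Finset.card_univ, Fintype.card_fin, ZMod.card,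
    mul_div_assoc, Nat.cast_pow, ← div_pow]
  gcongr
  rwa [le_div_iff₀ hM0]

theorem lift_nonrecurrence_from_Gd_general {d : ℕ} (δ : ℝ)
    (R : Set (Fin d → UnitAddCircle)) (hR : R ⊆ Gd d)
    (hnon : ∃ A : Set (Fin d → UnitAddCircle), A ⊆ Gd d ∧
      δ * ((Gd d).ncard : ℝ) < (A.ncard : ℝ) ∧ ∀ a ∈ A, ∀ b ∈ A, a - b ∉ R)
    (α : Fin d → UnitAddCircle) :
    ∃ ε₀ > (0 : ℝ), ∀ ε : ℝ, 0 < ε → ε ≤ ε₀ →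
      IntNonrecurrent δ {n : ℤ | n • α ∈ R + Veps d ε} := by
  obtain ⟨A, hAG, hAcard, hAR⟩ := hnon
  obtain ⟨θ, hδθ, hθ0, hθ⟩ : ∃ θ : ℝ, δ < A.ncard * θ ^ d ∧ 0 < θ ∧ θ < 1 / 2 := by
    have hhalf : δ < A.ncard * (1 / 2) ^ d := by
      rw [ncard_Gd, Nat.cast_pow, Nat.cast_ofNat] at hAcard
      rwa [one_div_pow, mul_one_div, lt_div_iff₀ (by positivity)]
    have hcont : ContinuousAt (fun θ : ℝ => A.ncard * θ ^ d) (1 / 2) := by fun_prop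
    exact (((hcont.eventually (lt_mem_nhds hhalf)).filter_mono nhdsWithin_le_nhds).and
      (Ioo_mem_nhdsLT (by norm_num : (0 : ℝ) < 1 / 2))).exists
  -- `ρ = (2θ + 1) / 8` gives `θ < 2ρ`, and `ε₀ = (1 - 2θ) / 4` gives `2ρ + ε₀ = 1/2`.
  refine ⟨(1 - 2 * θ) / 4, by linarith, fun ε _ hε => ?_⟩
  obtain ⟨t, ht⟩ := exists_le_upperDensity_sub_mem_add_Veps hAG (ρ := (2 * θ + 1) / 8)
    (by linarith) hθ0.le (by linarith) α
  refine ⟨_, hδθ.trans_le ht, fun a ha b hb hab => ?_⟩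
  refine sub_notMem_add_Veps hAG hR hAR (ρ := (2 * θ + 1) / 8) (ε := ε)
    (by linarith) ha hb ?_
  rwa [sub_sub_sub_cancel_right, ← sub_smul]

/-- If `R ⊆ G_d` is a `δ`-nonrecurrent subset of the finite group `G_d` (i.e. there
is `A ⊆ G_d` with `|A| > δ|G_d|` and `(A - A) ∩ R = ∅`), then for every `α ∈ 𝕋^d`
and all sufficiently small `ε > 0`, the set `S = {n ∈ ℤ : nα ∈ R + V_ε}` is
`δ`-nonrecurrent. -/
theorem lift_nonrecurrence_from_Gd {d : ℕ} (δ : ℝ) (hδ : 0 ≤ δ)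
    (R : Set (Fin d → UnitAddCircle)) (hR : R ⊆ Gd d)
    (hnon : ∃ A : Set (Fin d → UnitAddCircle), A ⊆ Gd d ∧
      δ * ((Gd d).ncard : ℝ) < (A.ncard : ℝ) ∧ ∀ a ∈ A, ∀ b ∈ A, a - b ∉ R)
    (α : Fin d → UnitAddCircle) :
    ∃ ε₀ > (0 : ℝ), ∀ ε : ℝ, 0 < ε → ε ≤ ε₀ →
      IntNonrecurrent δ {n : ℤ | n • α ∈ R + Veps d ε} :=
  lift_nonrecurrence_from_Gd_general δ R hR hnon α
end

section
/- Let δ ≥ 0 and m ∈ ℕ with m ≥ 1. If S ⊆ ℤ is δ-nonrecurrent, then S/m := {n ∈ ℤ : mn ∈ S} is also δ-nonrecurrent. -/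
open Filter Finset

/-- The counting fraction. -/
noncomputable def dfrac (A : Set ℤ) (N : ℕ) : ℝ :=
  ((A ∩ Set.Icc (1 : ℤ) (N : ℤ)).ncard : ℝ) / N

lemma inter_Icc_eq_coe (A : Set ℤ) (N : ℕ) [DecidablePred (· ∈ A)] :
    A ∩ Set.Icc (1 : ℤ) (N : ℤ) = ↑((Finset.Icc (1 : ℤ) (N : ℤ)).filter (· ∈ A)) := by
  ext n; simp [and_comm]; tauto

lemma ncard_inter_Icc_le (A : Set ℤ) (N : ℕ) :
    (A ∩ Set.Icc (1 : ℤ) (N : ℤ)).ncard ≤ N := by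
  classical
  rw [inter_Icc_eq_coe, Set.ncard_coe_finset]
  calc ((Finset.Icc (1 : ℤ) (N : ℤ)).filter (· ∈ A)).card
      ≤ (Finset.Icc (1 : ℤ) (N : ℤ)).card := Finset.card_filter_le _ _
    _ = N := by rw [Int.card_Icc]; simp

lemma dfrac_nonneg (A : Set ℤ) (N : ℕ) : 0 ≤ dfrac A N := by
  unfold dfrac; positivity

lemma dfrac_le_one (A : Set ℤ) (N : ℕ) : dfrac A N ≤ 1 := by
  unfold dfrac
  rcases Nat.eq_zero_or_pos N with h | h
  · simp [h]
  · rw [div_le_one (by exact_mod_cast h)]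
    exact_mod_cast ncard_inter_Icc_le A N

/-- Key counting lemma: elements of `A ∩ [1,M]` larger than `m` are of the form
`m*q + r` with `r < m` and `q ∈ (B r) ∩ [1, M/m + 1]`. -/
lemma count_le (A : Set ℤ) (m : ℕ) (hm : 1 ≤ m) (M : ℕ) :
    (A ∩ Set.Icc (1 : ℤ) (M : ℤ)).ncard ≤
      m + ∑ r ∈ Finset.range m,
        ({n : ℤ | (m : ℤ) * n + (r : ℤ) ∈ A} ∩ Set.Icc (1 : ℤ) ((M / m + 1 : ℕ) : ℤ)).ncard := by
  classical
  set K : ℕ := M / m + 1 with hK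
  have hm0 : (0 : ℤ) < (m : ℤ) := by exact_mod_cast hm
  have hMK : (M : ℤ) < (m : ℤ) * (K : ℤ) := by
    have h1 := Nat.div_add_mod M m
    have h2 : M % m < m := Nat.mod_lt M hm
    have : M < m * K := by
      calc M = m * (M / m) + M % m := h1.symm
        _ < m * (M / m) + m := by omega
        _ = m * K := by rw [hK]; ring
    exact_mod_cast this
  rw [inter_Icc_eq_coe, Set.ncard_coe_finset]
  have hsub : ((Finset.Icc (1 : ℤ) (M : ℤ)).filter (· ∈ A)) ⊆
      (Finset.Icc (1 : ℤ) (m : ℤ)) ∪ (Finset.range m).biUnion (fun r =>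
        ((Finset.Icc (1 : ℤ) ((K : ℕ) : ℤ)).filter
          (fun q => (m : ℤ) * q + (r : ℤ) ∈ A)).image (fun q => (m : ℤ) * q + (r : ℤ))) := by
    intro n hn
    simp only [Finset.mem_filter, Finset.mem_Icc] at hn
    obtain ⟨⟨h1n, hnM⟩, hnA⟩ := hn
    by_cases hsmall : n ≤ (m : ℤ)
    · exact Finset.mem_union_left _ (Finset.mem_Icc.mpr ⟨h1n, hsmall⟩)
    · push_neg at hsmall
      apply Finset.mem_union_right
      set q : ℤ := n / (m : ℤ) with hq
      set r : ℤ := n % (m : ℤ) with hr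
      have hr0 : 0 ≤ r := Int.emod_nonneg n (by omega)
      have hrm : r < (m : ℤ) := Int.emod_lt_of_pos n hm0
      have hn' : (m : ℤ) * q + r = n := Int.mul_ediv_add_emod n (m : ℤ)
      have hq1 : 1 ≤ q := by
        by_contra hqc
        push_neg at hqc
        have hq0 : q ≤ 0 := by omega
        have : (m : ℤ) * q ≤ 0 := mul_nonpos_of_nonneg_of_nonpos (le_of_lt hm0) hq0
        linarith
      have hqK : q ≤ (K : ℤ) := by
        have hmq : (m : ℤ) * q ≤ n := by linarith
        have : (m : ℤ) * q < (m : ℤ) * (K : ℤ) := by linarith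
        have := lt_of_mul_lt_mul_left this (le_of_lt hm0)
        omega
      refine Finset.mem_biUnion.mpr ⟨r.toNat, Finset.mem_range.mpr ?_, ?_⟩
      · omega
      · have hcast : ((r.toNat : ℤ)) = r := Int.toNat_of_nonneg hr0
        refine Finset.mem_image.mpr ⟨q, Finset.mem_filter.mpr ⟨Finset.mem_Icc.mpr ⟨hq1, hqK⟩, ?_⟩, ?_⟩
        · rw [hcast, hn']; exact hnA
        · rw [hcast, hn']
  calc ((Finset.Icc (1 : ℤ) (M : ℤ)).filter (· ∈ A)).card
      ≤ _ := Finset.card_le_card hsub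
    _ ≤ (Finset.Icc (1 : ℤ) (m : ℤ)).card + _ := Finset.card_union_le _ _
    _ ≤ m + ∑ r ∈ Finset.range m,
        ({n : ℤ | (m : ℤ) * n + (r : ℤ) ∈ A} ∩ Set.Icc (1 : ℤ) ((K : ℕ) : ℤ)).ncard := by
        gcongr
        · rw [Int.card_Icc]; simp
        · calc ((Finset.range m).biUnion _).card
              ≤ ∑ r ∈ Finset.range m, _ := Finset.card_biUnion_le
            _ ≤ _ := by
                apply Finset.sum_le_sum
                intro r _
                calc (((Finset.Icc (1 : ℤ) ((K : ℕ) : ℤ)).filter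
                      (fun q => (m : ℤ) * q + (r : ℤ) ∈ A)).image _).card
                    ≤ ((Finset.Icc (1 : ℤ) ((K : ℕ) : ℤ)).filter
                      (fun q => (m : ℤ) * q + (r : ℤ) ∈ A)).card := Finset.card_image_le
                  _ = _ := by
                      rw [inter_Icc_eq_coe {n : ℤ | (m : ℤ) * n + (r : ℤ) ∈ A} K,
                        Set.ncard_coe_finset]
                      rfl

/-- If `S ⊆ ℤ` is `δ`-nonrecurrent and `m ≥ 1`, then `S/m = {n ∈ ℤ : mn ∈ S}` is
also `δ`-nonrecurrent. -/
theorem quotient_nonrecurrent (δ : ℝ) (hδ : 0 ≤ δ) (m : ℕ) (hm : 1 ≤ m)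
    (S : Set ℤ) (h : IntNonrecurrent δ S) :
    IntNonrecurrent δ {n : ℤ | (m : ℤ) * n ∈ S} := by
  classical
  obtain ⟨A, hA, hAS⟩ := h
  set B : ℕ → Set ℤ := fun r => {n : ℤ | (m : ℤ) * n + (r : ℤ) ∈ A} with hB
  suffices hr : ∃ r < m, δ < upperDensity (B r) by
    obtain ⟨r, _, hd⟩ := hr
    refine ⟨B r, hd, fun a ha b hb hs => ?_⟩
    have hdiff : ((m : ℤ) * a + (r : ℤ)) - ((m : ℤ) * b + (r : ℤ)) = (m : ℤ) * (a - b) := by ring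
    exact hAS _ ha _ hb (by rw [hdiff]; exact hs)
  by_contra hcon
  push_neg at hcon
  -- show upperDensity A ≤ δ, contradicting hA
  have hub : ∀ N, dfrac A N ≤ 1 := dfrac_le_one A
  have hbdd : ∀ C : Set ℤ, IsBoundedUnder (· ≤ ·) atTop (dfrac C) :=
    fun C => isBoundedUnder_of ⟨1, fun N => dfrac_le_one C N⟩
  have hcob : IsCoboundedUnder (· ≤ ·) atTop (dfrac A) :=
    (isBoundedUnder_of ⟨(0 : ℝ), fun N => dfrac_nonneg A N⟩ :
      IsBoundedUnder (· ≥ ·) atTop (dfrac A)).isCoboundedUnder_le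
  have hled : upperDensity A ≤ δ := by
    by_contra hlt
    push_neg at hlt
    set ε : ℝ := (upperDensity A - δ) / 2 with hε
    have hε0 : 0 < ε := by simp only [hε]; linarith
    set ε' : ℝ := ε / 2 with hε'
    have hε'0 : 0 < ε' := by positivity
    -- each B r eventually has fraction < δ + ε'
    have hev : ∀ᶠ K in atTop, ∀ r ∈ Finset.range m, dfrac (B r) K < δ + ε' := by
      rw [Filter.eventually_all_finset]
      intro r _
      exact eventually_lt_of_limsup_lt
        (lt_of_le_of_lt (hcon r (Finset.mem_range.mp ‹r ∈ Finset.range m›)) (by linarith))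
        (hbdd (B r))
    obtain ⟨K₀, hK₀⟩ := Filter.eventually_atTop.mp hev
    obtain ⟨M₁, hM₁⟩ := exists_nat_ge ((2 * m : ℝ) / ε')
    have hfinal : ∀ᶠ M in atTop, dfrac A M ≤ δ + ε := by
      rw [Filter.eventually_atTop]
      refine ⟨max (max (m * K₀) 1) (M₁ + 1), fun M hM => ?_⟩
      have hM1 : 1 ≤ M := le_trans (le_trans (le_max_right _ _) (le_max_left _ _)) hM
      have hMK₀ : m * K₀ ≤ M := le_trans (le_trans (le_max_left _ _) (le_max_left _ _)) hM
      have hMM₁ : M₁ + 1 ≤ M := le_trans (le_max_right _ _) hM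
      set K : ℕ := M / m + 1 with hKdef
      have hKK₀ : K₀ ≤ K := by
        have : K₀ ≤ M / m := (Nat.le_div_iff_mul_le (by omega)).mpr (by rw [Nat.mul_comm]; exact hMK₀)
        omega
      have hfr : ∀ r ∈ Finset.range m, dfrac (B r) K < δ + ε' := hK₀ K hKK₀
      -- real-valued estimates
      have hM0 : (0 : ℝ) < (M : ℝ) := by exact_mod_cast hM1
      have hK0 : (0 : ℝ) < (K : ℝ) := by positivity
      have hm0 : (0 : ℝ) < (m : ℝ) := by exact_mod_cast hm
      have hcount : ((A ∩ Set.Icc (1 : ℤ) (M : ℤ)).ncard : ℝ) ≤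
          (m : ℝ) + ∑ r ∈ Finset.range m, ((B r ∩ Set.Icc (1 : ℤ) (K : ℤ)).ncard : ℝ) := by
        have := count_le A m hm M
        push_cast
        exact_mod_cast this
      have hKM : (K : ℝ) / M ≤ 1 / m + 1 / M := by
        have h1 : ((M / m : ℕ) : ℝ) ≤ (M : ℝ) / m := Nat.cast_div_le
        have h2 : (K : ℝ) = ((M / m : ℕ) : ℝ) + 1 := by exact_mod_cast rfl
        have h3 : (1 / (m : ℝ) + 1 / M) * M = (M : ℝ) / m + 1 := by field_simp
        rw [div_le_iff₀ hM0, h3, h2]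
        linarith
      have hterm : ∀ r ∈ Finset.range m,
          ((B r ∩ Set.Icc (1 : ℤ) (K : ℤ)).ncard : ℝ) / M ≤ dfrac (B r) K / m + 1 / M := by
        intro r hrm
        have heq : ((B r ∩ Set.Icc (1 : ℤ) (K : ℤ)).ncard : ℝ) / M = dfrac (B r) K * (K / M) := by
          unfold dfrac
          field_simp
        rw [heq]
        calc dfrac (B r) K * ((K : ℝ) / M) ≤ dfrac (B r) K * (1 / m + 1 / M) :=
              mul_le_mul_of_nonneg_left hKM (dfrac_nonneg _ _)
          _ = dfrac (B r) K * (1 / m) + dfrac (B r) K * (1 / M) := by ring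
          _ ≤ dfrac (B r) K * (1 / m) + 1 * (1 / M) := by
              gcongr
              exact dfrac_le_one _ _
          _ = dfrac (B r) K / m + 1 / M := by ring
      have hsum : ∑ r ∈ Finset.range m, ((B r ∩ Set.Icc (1 : ℤ) (K : ℤ)).ncard : ℝ) / M ≤
          (∑ r ∈ Finset.range m, dfrac (B r) K) / m + m / M := by
        calc ∑ r ∈ Finset.range m, ((B r ∩ Set.Icc (1 : ℤ) (K : ℤ)).ncard : ℝ) / M
            ≤ ∑ r ∈ Finset.range m, (dfrac (B r) K / m + 1 / M) := Finset.sum_le_sum hterm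
          _ = (∑ r ∈ Finset.range m, dfrac (B r) K) / m + m / M := by
              rw [Finset.sum_add_distrib, ← Finset.sum_div]
              simp [Finset.card_range]
              ring
      have hsum2 : (∑ r ∈ Finset.range m, dfrac (B r) K) / m ≤ δ + ε' := by
        rw [div_le_iff₀ hm0]
        calc ∑ r ∈ Finset.range m, dfrac (B r) K
            ≤ ∑ _r ∈ Finset.range m, (δ + ε') := Finset.sum_le_sum (fun r hr => (hfr r hr).le)
          _ = (δ + ε') * m := by simp [Finset.card_range]; ring
      have h2mM : 2 * (m : ℝ) / M ≤ ε' := by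
        rw [div_le_iff₀ hM0]
        have : ((2 * m : ℝ) / ε') ≤ (M : ℝ) := le_trans hM₁ (by exact_mod_cast by omega)
        rw [div_le_iff₀ hε'0] at this
        linarith
      calc dfrac A M = ((A ∩ Set.Icc (1 : ℤ) (M : ℤ)).ncard : ℝ) / M := rfl
        _ ≤ ((m : ℝ) + ∑ r ∈ Finset.range m, ((B r ∩ Set.Icc (1 : ℤ) (K : ℤ)).ncard : ℝ)) / M := by
            gcongr
        _ = (m : ℝ) / M + ∑ r ∈ Finset.range m, ((B r ∩ Set.Icc (1 : ℤ) (K : ℤ)).ncard : ℝ) / M := by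
            rw [add_div, Finset.sum_div]
        _ ≤ (m : ℝ) / M + ((∑ r ∈ Finset.range m, dfrac (B r) K) / m + m / M) := by gcongr
        _ ≤ (m : ℝ) / M + (δ + ε' + m / M) := by gcongr
        _ = δ + ε' + 2 * m / M := by ring
        _ ≤ δ + ε' + ε' := by gcongr
        _ = δ + ε := by rw [hε']; ring
    have : upperDensity A ≤ δ + ε := limsup_le_of_le hcob hfinal
    simp only [hε] at this
    linarith
  linarith
end
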